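/- Let n ≥ 2 and let w = w_1⋯w_n ∈ S_n with w_n = n; set k := cdes_L(w) and w_{n+1} := w_1. Then the (w)-simplex Δ_(w) equals the set of x ∈ ℝ^n satisfying: x_1 + ⋯ + x_n = k, and for every i ∈ [n]: if w_i < w_{i+1} then x_{[w_i, w_{i+1}]} ≥ cdes_L(w|_{[w_i, w_{i+1}]}) − 1, and if w_i > w_{i+1} then x_{[w_{i+1}, w_i]} ≤ cdes_L(w|_{[w_{i+1}, w_i]}). -/

import Mathlib

/-!
Every vertex `e_{I_r(w)}` has coordinate sum `k`. For an edge `(w_p, w_{p+1})` of the cyclic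
word `w`, the interval sum `x_{[w_p, w_{p+1}]}` takes the value
`cdes_L(w|_{[w_p, w_{p+1}]}) - 1 + [r = w_p]` at `e_{I_r(w)}`: when the starting position of
the rotation advances past `w_s`, the descent set gains the letter `w_s` and loses `w_s - 1`,
and this changes the interval sum only as the start crosses the edge.
So the `n` functionals `x_{[w_p, w_{p+1}]} - cdes_L(w|_{[w_p, w_{p+1}]}) + 1` are barycentric
coordinates of the vertices on the hyperplane `∑ x = k`. They determine the point there: if all
the interval sums of a vector with zero sum vanish, its prefix sums are constant along the
cycle `w`, hence everywhere. Their sum is constant on the hyperplane, being the winding number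
of `w` around the circle times `k` minus a constant. A descent edge gives the same inequality,
because `x_{[j,i]} = k - x_{[i,j]}` and `cdes_L(w|_{[i,j]}) + cdes_L(w|_{[j,i]}) = k + 1`.
-/

namespace PositroidPaper

variable {n : ℕ}

/-- The last element `n` of `[n] = {1,…,n}`, realized as the last element of `Fin n`. -/
def lastF (n : ℕ) [NeZero n] : Fin n :=
  ⟨n - 1, by have := Nat.pos_of_ne_zero (NeZero.ne n); omega⟩

/-- The Gale order `S ≤ᵢ T` with respect to the `i`-order on `Fin n`
(the `i`-order is transported to the natural order on `Fin n` by `a ↦ a - i`). -/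
def galeLE (i : Fin n) (S T : Finset (Fin n)) : Prop :=
  List.Forall₂ (· ≤ ·) ((S.image (fun a => a - i)).sort (· ≤ ·))
    ((T.image (fun a => a - i)).sort (· ≤ ·))

/-- A Grassmann necklace of type `(k,n)`. -/
def IsGrassmannNecklace (n k : ℕ) [NeZero n] (J : Fin n → Finset (Fin n)) : Prop :=
  (∀ i, (J i).card = k) ∧
    ∀ i : Fin n,
      (i ∈ J i → ∃ j : Fin n, J (i + 1) = insert j ((J i).erase i)) ∧
      (i ∉ J i → J (i + 1) = J i)

/-- `B(J)`: the `k`-subsets `B` of `[n]` with `J_i ≤ᵢ B` for all `i`. -/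
noncomputable def necklaceBases (n k : ℕ) (J : Fin n → Finset (Fin n)) :
    Finset (Finset (Fin n)) := by
  classical
  exact (Finset.powersetCard k (Finset.univ : Finset (Fin n))).filter
    (fun B => ∀ i, galeLE i (J i) B)

/-- The maximal minor of a `k × n` matrix on the column set `I` (taken in increasing order);
junk value `0` if `I` does not have exactly `k` elements. -/
noncomputable def colMinor {k n : ℕ} (A : Matrix (Fin k) (Fin n) ℝ) (I : Finset (Fin n)) : ℝ :=
  if h : I.card = k then (A.submatrix id (fun j => ((I.orderIsoOfFin h) j : Fin n))).det else 0

/-- `Bs` is the set of bases of a rank-`k` positroid on `[n]`. -/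
def IsPositroidBases (n k : ℕ) (Bs : Finset (Finset (Fin n))) : Prop :=
  ∃ A : Matrix (Fin k) (Fin n) ℝ, A.rank = k ∧
    (∀ I : Finset (Fin n), 0 ≤ colMinor A I) ∧
    ∀ I : Finset (Fin n), I ∈ Bs ↔ I.card = k ∧ colMinor A I ≠ 0

/-- The 0/1 indicator vector `e_B ∈ ℝ^n` of `B ⊆ [n]`. -/
def indic (B : Finset (Fin n)) : Fin n → ℝ := fun a => if a ∈ B then 1 else 0

/-- The positroid polytope `P_J = conv{e_B : B ∈ B(J)}`. -/
def PJ (n k : ℕ) (J : Fin n → Finset (Fin n)) : Set (Fin n → ℝ) :=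
  convexHull ℝ {x | ∃ B ∈ necklaceBases n k J, x = indic B}

/-- The `j`-th element (0-indexed) of `S` in the `i`-order. -/
noncomputable def nthGale [NeZero n] (i : Fin n) (S : Finset (Fin n)) (j : ℕ) : Fin n :=
  ((S.image (fun a => a - i)).sort (· ≤ ·)).getD j 0 + i

/-- The (closed) cyclic interval `[i,j] ⊆ [n]`. -/
def cycInterval (i j : Fin n) : Finset (Fin n) :=
  Finset.univ.filter (fun a => a - i ≤ j - i)

/-- `x_{[i,j]} = x_i + x_{i+1} + ⋯ + x_{j-1}` (cyclically; the empty sum if `i = j`). -/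
def cycSum (x : Fin n → ℝ) (i j : Fin n) : ℝ :=
  ∑ a ∈ Finset.univ.filter (fun a : Fin n => a - i < j - i), x a

/-- The set of cyclic left descents of the word `w|_S`, where `S ⊆ [n]` is totally ordered
by the `i`-order: an element `a ∈ S` belongs to this set iff either `a` has a successor `b`
in `S` (w.r.t. the `i`-order) occurring to its left in `w`, or `a` is the maximum of `S`,
`S` has at least two elements, and the minimum of `S` occurs to the left of `a` in `w`. -/
noncomputable def cDesL (w : Equiv.Perm (Fin n)) (i : Fin n) (S : Finset (Fin n)) :
    Finset (Fin n) := by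
  classical
  exact S.filter (fun a =>
    (∃ b ∈ S, a - i < b - i ∧ (∀ c ∈ S, a - i < c - i → b - i ≤ c - i) ∧ w⁻¹ b < w⁻¹ a) ∨
    ((∀ b ∈ S, b - i ≤ a - i) ∧ ∃ m ∈ S, m ≠ a ∧ (∀ b ∈ S, m - i ≤ b - i) ∧ w⁻¹ m < w⁻¹ a))

/-- `cdes_L(w|_S)` where `S` is ordered by the `i`-order. -/
noncomputable def cdesL (w : Equiv.Perm (Fin n)) (i : Fin n) (S : Finset (Fin n)) : ℕ :=
  (cDesL w i S).card

/-- The cyclic rotation `w^{(r)}` of the word `w_1 ⋯ w_n` ending at the letter `r`. -/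
def rotTo [NeZero n] (w : Equiv.Perm (Fin n)) (r : Fin n) : Equiv.Perm (Fin n) :=
  (Equiv.addRight (w⁻¹ r + 1)).trans w

/-- `I_r(w) = cDes_L(w^{(r)})`. -/
noncomputable def IrFinset [NeZero n] (w : Equiv.Perm (Fin n)) (r : Fin n) : Finset (Fin n) :=
  cDesL (rotTo w r) 0 Finset.univ

/-- The vertex set `{e_{I_r(w)} : r ∈ [n]}` of the `(w)`-simplex. -/
def vertexSet [NeZero n] (w : Equiv.Perm (Fin n)) : Set (Fin n → ℝ) :=
  {x | ∃ r : Fin n, x = indic (IrFinset w r)}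

/-- The `(w)`-simplex `Δ_(w) = conv{e_{I_1(w)},…,e_{I_n(w)}}`. -/
def simplexW [NeZero n] (w : Equiv.Perm (Fin n)) : Set (Fin n → ℝ) :=
  convexHull ℝ (vertexSet w)

/-- The set `D_J` of permutations labelling the circuit triangulation of `P_J`. -/
noncomputable def DJ (n k : ℕ) [NeZero n] (J : Fin n → Finset (Fin n)) :
    Finset (Equiv.Perm (Fin n)) := by
  classical
  exact Finset.univ.filter (fun w =>
    w (lastF n) = lastF n ∧ cdesL w 0 Finset.univ = k ∧
      ∀ r j : Fin n, galeLE j (J j) (IrFinset w r))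

/-- Connectedness of a matroid on `[n]` given by its set of bases: the ground set admits no
partition into nonempty `A`, `Aᶜ` such that every basis is a union of a basis of the
restriction to `A` and one of the restriction to `Aᶜ`, all such unions being bases. -/
def ConnectedBases (Bs : Finset (Finset (Fin n))) : Prop :=
  ¬ ∃ A : Finset (Fin n), A.Nonempty ∧ Aᶜ.Nonempty ∧
      ∀ B₁ ∈ Bs, ∀ B₂ ∈ Bs, (B₁ ∩ A) ∪ (B₂ \ A) ∈ Bs

/-- `Δ_(u)` and `Δ_(w)` share a common facet. -/
def SharedFacet [NeZero n] (u w : Equiv.Perm (Fin n)) : Prop :=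
  (vertexSet u ∩ vertexSet w).ncard = n - 1 ∧
    simplexW u ∩ simplexW w = convexHull ℝ (vertexSet u ∩ vertexSet w)

/-- The graph `Γ_J` of the circuit triangulation of `P_J`. -/
def gammaJ (n k : ℕ) [NeZero n] (J : Fin n → Finset (Fin n)) :
    SimpleGraph (Equiv.Perm (Fin n)) where
  Adj u w := u ≠ w ∧ u ∈ DJ n k J ∧ w ∈ DJ n k J ∧ SharedFacet u w
  symm := by
    constructor
    rintro u w ⟨hne, hu, hw, hc, hi⟩
    refine ⟨hne.symm, hw, hu, ?_, ?_⟩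
    · rwa [Set.inter_comm]
    · rw [Set.inter_comm (simplexW w) (simplexW u), Set.inter_comm (vertexSet w) (vertexSet u)]
      exact hi
  loopless := ⟨fun u h => h.1 rfl⟩

/-- Graph distance in `Γ_J`. -/
noncomputable def distJ (n k : ℕ) [NeZero n] (J : Fin n → Finset (Fin n))
    (u w : Equiv.Perm (Fin n)) : ℕ :=
  (gammaJ n k J).dist u w

/-- The partial order `≺` on `D_J` determined by `w₀`. -/
def precJ (n k : ℕ) [NeZero n] (J : Fin n → Finset (Fin n))
    (w0 u v : Equiv.Perm (Fin n)) : Prop :=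
  u ≠ v ∧ distJ n k J w0 u + distJ n k J u v = distJ n k J w0 v

/-- `cover(w)`: the number of elements of `D_J` covered by `w` in `(D_J, ≺)`. -/
noncomputable def coverNum (n k : ℕ) [NeZero n] (J : Fin n → Finset (Fin n))
    (w0 w : Equiv.Perm (Fin n)) : ℕ :=
  {u : Equiv.Perm (Fin n) | u ∈ DJ n k J ∧ precJ n k J w0 u w ∧
    ¬ ∃ v ∈ DJ n k J, precJ n k J w0 u v ∧ precJ n k J w0 v w}.ncard

/-- The facet of `Δ_(w)` obtained by deleting the vertex `e_{I_r(w)}`. -/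
def facetW [NeZero n] (w : Equiv.Perm (Fin n)) (r : Fin n) : Set (Fin n → ℝ) :=
  convexHull ℝ {x | ∃ r' : Fin n, r' ≠ r ∧ x = indic (IrFinset w r')}

/-- The Ehrhart counting function `L(X,t) = #(t·X ∩ ℤ^m)`. -/
noncomputable def Lcount {m : ℕ} (X : Set (Fin m → ℝ)) (t : ℕ) : ℕ :=
  ((fun x : Fin m → ℝ => (t : ℝ) • x) '' X ∩ {x | ∀ a, ∃ z : ℤ, x a = (z : ℝ)}).ncard

/-- Projection `ℝ^n → ℝ^{n-1}` onto the first `n-1` coordinates. -/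
def proj (n : ℕ) (x : Fin n → ℝ) : Fin (n - 1) → ℝ :=
  fun a => x (Fin.castLE (Nat.sub_le n 1) a)

/-- `F` is an upper facet of `Q ⊆ ℝ^m`. -/
def IsUpperFacet {m : ℕ} (Q F : Set (Fin m → ℝ)) : Prop :=
  ∃ a b : Fin m, a ≤ b ∧ ∃ c : ℤ,
    F = Q ∩ {x | ∑ t ∈ Finset.Icc a b, x t = (c : ℝ)} ∧
    Q ⊆ {x | ∑ t ∈ Finset.Icc a b, x t ≤ (c : ℝ)} ∧
    Module.finrank ℝ (affineSpan ℝ F).direction = m - 1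

/-- The half-open polytope: `Q` with all its upper facets removed. -/
def halfOpen {m : ℕ} (Q : Set (Fin m → ℝ)) : Set (Fin m → ℝ) :=
  Q \ ⋃₀ {F | IsUpperFacet Q F}

/-- The half-open simplex `∇°_w`. -/
def nablaO [NeZero n] (w : Equiv.Perm (Fin n)) : Set (Fin n → ℝ) :=
  {y | 0 < y (w 0) ∧ y (w (lastF n)) ≤ 1 ∧
    ∀ p : Fin n, p ≠ lastF n →
      (w p < w (p + 1) → y (w p) ≤ y (w (p + 1))) ∧
      (w (p + 1) < w p → y (w p) < y (w (p + 1)))}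

/-- `des(w) = #{i ∈ [n-1] : w_i > w_{i+1}}`. -/
noncomputable def desNum [NeZero n] (w : Equiv.Perm (Fin n)) : ℕ := by
  classical
  exact (Finset.univ.filter (fun p : Fin n => p ≠ lastF n ∧ w (p + 1) < w p)).card

/-- `F` is a facet of the polytope `P ⊆ ℝ^n`. -/
def IsFacetOf {n : ℕ} (P F : Set (Fin n → ℝ)) : Prop :=
  ∃ (u : Fin n → ℝ) (c : ℝ),
    F = P ∩ {x | ∑ a, u a * x a = c} ∧ P ⊆ {x | ∑ a, u a * x a ≤ c} ∧
    Module.finrank ℝ (affineSpan ℝ F).direction + 1 =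
      Module.finrank ℝ (affineSpan ℝ P).direction


section Barycentric

variable {ι E : Type*} [Fintype ι] [DecidableEq ι] [AddCommGroup E] [Module ℝ E]

theorem convexHull_range_eq_of_barycentric [Nonempty ι] {H : Set E} (hH : Convex ℝ H)
    (v : ι → E) (ℓ : ι → E →ₗ[ℝ] ℝ) (d : ι → ℝ) (hvH : ∀ i, v i ∈ H)
    (hℓv : ∀ i j, ℓ i (v j) = d i + if i = j then 1 else 0)
    (hinj : ∀ x ∈ H, ∀ y ∈ H, (∀ i, ℓ i x = ℓ i y) → x = y)
    (hsum : ∀ x ∈ H, ∀ y ∈ H, ∑ i, ℓ i x = ∑ i, ℓ i y) :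
    convexHull ℝ (Set.range v) = {x | x ∈ H ∧ ∀ i, d i ≤ ℓ i x} := by
  apply subset_antisymm
  · refine convexHull_min ?_ ?_
    · rintro _ ⟨j, rfl⟩
      refine ⟨hvH j, fun i => ?_⟩
      rw [hℓv]
      split_ifs <;> linarith
    · have : {x | x ∈ H ∧ ∀ i, d i ≤ ℓ i x} = H ∩ ⋂ i, {x | d i ≤ ℓ i x} := by ext; simp
      rw [this]
      exact hH.inter (convex_iInter fun i => convex_halfSpace_ge (ℓ i).isLinear (d i))
  · rintro x ⟨hxH, hdx⟩
    -- the barycentric coordinates of `x`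
    set μ : ι → ℝ := fun i => ℓ i x - d i
    have hμ0 : ∀ i ∈ Finset.univ, 0 ≤ μ i := fun i _ => sub_nonneg.mpr (hdx i)
    obtain ⟨j₀⟩ := ‹Nonempty ι›
    have hμsum : ∑ i, μ i = 1 := by
      simp only [μ, Finset.sum_sub_distrib, hsum x hxH (v j₀) (hvH j₀), hℓv,
        Finset.sum_add_distrib, Finset.sum_ite_eq', Finset.mem_univ, if_true]
      ring
    have hℓμ : ∀ j, ℓ j x = ℓ j (∑ i, μ i • v i) := by
      intro j
      simp only [map_sum, map_smul, hℓv, smul_eq_mul, mul_add, Finset.sum_add_distrib,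
        ← Finset.sum_mul, hμsum, mul_ite, mul_one, mul_zero, Finset.sum_ite_eq, Finset.mem_univ,
        if_true, μ]
      ring
    rw [hinj x hxH _ (hH.sum_mem hμ0 hμsum fun i _ => hvH i) hℓμ]
    exact (convex_convexHull ℝ _).sum_mem hμ0 hμsum fun i _ => subset_convexHull ℝ _ ⟨i, rfl⟩

end Barycentric

section CyclicArithmetic

theorem val_sub_eq_ite (a b : Fin n) :
    ((a - b : Fin n) : ℕ) = if (b : ℕ) ≤ a then (a : ℕ) - b else n + (a : ℕ) - b := by
  split_ifs with h
  · exact Fin.coe_sub_iff_le.mpr h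
  · exact Fin.coe_sub_iff_lt.mpr (not_le.mp h)

variable [NeZero n]

theorem val_add_one_eq_ite (a : Fin n) :
    ((a + 1 : Fin n) : ℕ) = if (a : ℕ) + 1 = n then 0 else (a : ℕ) + 1 := by
  rw [Fin.val_add, Fin.val_one', Nat.add_mod_mod]
  split_ifs with h
  · rw [h, Nat.mod_self]
  · exact Nat.mod_eq_of_lt (by omega)

theorem add_one_ne_self (hn : 2 ≤ n) (a : Fin n) : a + 1 ≠ a := fun h => by
  have := congrArg Fin.val h
  rw [val_add_one_eq_ite] at this
  split_ifs at this <;> omega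

theorem lt_add_one_iff_add_one_ne_zero (a : Fin n) : a < a + 1 ↔ a + 1 ≠ 0 := by
  rw [Fin.lt_def, ne_eq, Fin.ext_iff, val_add_one_eq_ite]
  split_ifs <;> simp

open Fin.NatCast in
theorem apply_eq_apply_of_forall_add_one {α : Type*} {f : Fin n → α}
    (h : ∀ s, f (s + 1) = f s) (s t : Fin n) : f s = f t := by
  have key : ∀ k : ℕ, f (k : Fin n) = f 0 := by
    intro k
    induction k with
    | zero => rw [Nat.cast_zero]
    | succ k ih => rw [Nat.cast_succ, h, ih]
  rw [← Fin.cast_val_eq_self s, ← Fin.cast_val_eq_self t, key, key]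

end CyclicArithmetic

section CyclicSums

variable [NeZero n]

@[simps]
def cycSumₗ (i j : Fin n) : (Fin n → ℝ) →ₗ[ℝ] ℝ where
  toFun x := cycSum x i j
  map_add' _ _ := Finset.sum_add_distrib
  map_smul' _ _ := (Finset.mul_sum _ _ _).symm

@[simp]
theorem cycSum_self (x : Fin n → ℝ) (i : Fin n) : cycSum x i i = 0 := by
  simp [cycSum]

theorem cycSum_add_one (x : Fin n → ℝ) (i j : Fin n) :
    cycSum x i (j + 1) = cycSum x i j + x j - if j + 1 = i then ∑ a, x a else 0 := by
  have key : ∀ a, (if a - i < j + 1 - i then x a else 0) = (if a - i < j - i then x a else 0)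
      + (if a = j then x a else 0) - (if j + 1 = i then x a else 0) := by
    intro a
    have := a.isLt; have := i.isLt; have := j.isLt
    simp only [Fin.lt_def, Fin.ext_iff, val_sub_eq_ite, val_add_one_eq_ite]
    split_ifs <;> first | omega | ring1
  simp only [cycSum, Finset.sum_filter, key, Finset.sum_add_distrib, Finset.sum_sub_distrib,
    Finset.sum_ite_eq', Finset.mem_univ, if_true]
  split_ifs <;> simp

theorem cycSum_eq_sub_add (x : Fin n → ℝ) (i j : Fin n) :
    cycSum x i j = cycSum x 0 j - cycSum x 0 i + if j < i then ∑ a, x a else 0 := by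
  have key : ∀ a, (if a - i < j - i then x a else 0) = (if a < j then x a else 0)
      - (if a < i then x a else 0) + (if j < i then x a else 0) := by
    intro a
    have := a.isLt; have := i.isLt; have := j.isLt
    simp only [Fin.lt_def, val_sub_eq_ite]
    split_ifs <;> first | omega | ring1
  simp only [cycSum, sub_zero, Finset.sum_filter, key, Finset.sum_add_distrib,
    Finset.sum_sub_distrib]
  split_ifs <;> simp

theorem cycSum_add_cycSum_swap (x : Fin n → ℝ) {i j : Fin n} (h : i ≠ j) :
    cycSum x i j + cycSum x j i = ∑ a, x a := by
  rw [cycSum_eq_sub_add x i j, cycSum_eq_sub_add x j i]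
  rcases h.lt_or_gt with hij | hji
  · simp only [hij, hij.not_gt, if_true, if_false]; ring
  · simp only [hji, hji.not_gt, if_true, if_false]; ring

theorem cycSum_sub_comp_add_one (g : Fin n → ℝ) (i j : Fin n) :
    cycSum (fun a => g a - g (a + 1)) i j = g i - g j := by
  have htotal : ∑ a, (g a - g (a + 1)) = 0 := by
    rw [Finset.sum_sub_distrib, sub_eq_zero]
    exact (Equiv.sum_comp (Equiv.addRight 1) g).symm
  have hstep : ∀ j, cycSum (fun a => g a - g (a + 1)) i (j + 1) + g (j + 1)
      = cycSum (fun a => g a - g (a + 1)) i j + g j := by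
    intro j
    rw [cycSum_add_one, htotal, ite_self]
    ring
  have := apply_eq_apply_of_forall_add_one
    (f := fun j => cycSum (fun a => g a - g (a + 1)) i j + g j) hstep j i
  rw [cycSum_self] at this
  linarith

open Finset in
theorem sum_cycSum_comp_add_one (x : Fin n → ℝ) (f : Fin n → Fin n) :
    ∑ p, cycSum x (f p) (f (p + 1)) = #{p | f (p + 1) < f p} * ∑ a, x a := by
  have htele : ∑ p, (cycSum x 0 (f (p + 1)) - cycSum x 0 (f p)) = 0 := by
    rw [Finset.sum_sub_distrib, sub_eq_zero]
    exact Equiv.sum_comp (Equiv.addRight 1) (fun p => cycSum x 0 (f p))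
  simp only [cycSum_eq_sub_add x (f _) (f (_ + 1)), Finset.sum_add_distrib, htele, zero_add,
    Finset.sum_ite, Finset.sum_const_zero, add_zero, Finset.sum_const, nsmul_eq_mul]

theorem eq_zero_of_cycSum_comp_add_one_eq_zero {z : Fin n → ℝ} (hz : ∑ a, z a = 0)
    {f : Fin n → Fin n} (hf : Function.Surjective f) (h : ∀ p, cycSum z (f p) (f (p + 1)) = 0) :
    z = 0 := by
  have hdiff : ∀ i j, cycSum z i j = cycSum z 0 j - cycSum z 0 i := by
    intro i j
    rw [cycSum_eq_sub_add, hz, ite_self, add_zero]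
  have hconst : ∀ a, cycSum z 0 a = 0 := by
    intro a
    obtain ⟨p, rfl⟩ := hf a
    obtain ⟨q, hq⟩ := hf 0
    have hstep : ∀ p, cycSum z 0 (f (p + 1)) = cycSum z 0 (f p) := fun p => by
      have := h p
      rw [hdiff] at this
      linarith
    rw [apply_eq_apply_of_forall_add_one (f := fun p => cycSum z 0 (f p)) hstep p q, hq,
      cycSum_self]
  funext a
  have := cycSum_add_one z a a
  rw [cycSum_self, hz, ite_self, hdiff, hconst, hconst] at this
  simpa using this.symm

end CyclicSums

section Descents

theorem mem_cycInterval {i j a : Fin n} : a ∈ cycInterval i j ↔ a - i ≤ j - i := by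
  simp [cycInterval]

theorem sum_indic (B : Finset (Fin n)) : ∑ a, indic B a = B.card := by
  simp [indic]

variable [NeZero n]

/-- The cyclic left descents of the word `w` read cyclically from position `s`: the letters `a`
such that `a + 1`, computed in `Fin n` and so wrapping around, is met before `a`. -/
def descentsFrom (w : Equiv.Perm (Fin n)) (s : Fin n) : Finset (Fin n) :=
  {a | w⁻¹ (a + 1) - s < w⁻¹ a - s}

theorem mem_cDesL_cycInterval (w : Equiv.Perm (Fin n)) {i j a : Fin n} (hij : i ≠ j) :
    a ∈ cDesL w i (cycInterval i j) ↔
      a ∈ cycInterval i j ∧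
        if a = j then w⁻¹ i < w⁻¹ j else w⁻¹ (a + 1) < w⁻¹ a := by
  have hinj : ∀ {b c : Fin n}, ((b - i : Fin n) : ℕ) = ((c - i : Fin n) : ℕ) → b = c :=
    fun h => sub_left_inj.mp (Fin.ext h)
  have hsucc : ∀ {b : Fin n}, ((b - i : Fin n) : ℕ) < ((j - i : Fin n) : ℕ) →
      (((b + 1) - i : Fin n) : ℕ) = ((b - i : Fin n) : ℕ) + 1 := by
    intro b hb
    have := (j - i).isLt
    rw [show (b + 1) - i = (b - i) + 1 by abel, val_add_one_eq_ite, if_neg (by omega)]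
  have hii : ((i - i : Fin n) : ℕ) = 0 := by simp
  simp only [cDesL, Finset.mem_filter, mem_cycInterval, Fin.lt_def, Fin.le_def]
  refine and_congr_right fun haS => ?_
  split_ifs with haj
  · subst haj
    constructor
    · rintro (⟨b, hbS, hab, -, -⟩ | ⟨-, m, -, -, hmin, hlt⟩)
      · omega
      · have hmi : m = i := hinj (by have := hmin i (by omega); omega)
        rwa [hmi] at hlt
    · intro hlt
      exact Or.inr ⟨fun b hb => hb, i, by omega, hij, fun b _ => by omega, hlt⟩
  · have haj' : ((a - i : Fin n) : ℕ) < ((j - i : Fin n) : ℕ) :=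
      lt_of_le_of_ne haS fun h => haj (hinj h)
    constructor
    · rintro (⟨b, hbS, hab, hmin, hlt⟩ | ⟨hmax, -⟩)
      · have hle := hmin (a + 1) (by rw [hsucc haj']; omega) (by rw [hsucc haj']; omega)
        have hb : b = a + 1 := hinj (by rw [hsucc haj'] at hle ⊢; omega)
        rwa [hb] at hlt
      · exact absurd (hmax j le_rfl) (by omega)
    · intro hlt
      refine Or.inl ⟨a + 1, by rw [hsucc haj']; omega, by rw [hsucc haj']; omega,
        fun c _ hc => by rw [hsucc haj']; omega, hlt⟩

theorem cDesL_univ (hn : 2 ≤ n) (w : Equiv.Perm (Fin n)) :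
    cDesL w 0 Finset.univ = descentsFrom w 0 := by
  have hlast : ((-1 : Fin n) : ℕ) = n - 1 := by
    rw [← zero_sub, val_sub_eq_ite, Fin.val_one', Nat.mod_eq_of_lt (by omega)]
    simp
  have huniv : cycInterval (0 : Fin n) (-1) = Finset.univ := by
    ext a
    simp only [mem_cycInterval, sub_zero, Fin.le_def, hlast, Finset.mem_univ, iff_true]
    omega
  have hne : (0 : Fin n) ≠ -1 := fun h => by
    have := congrArg Fin.val h
    rw [hlast] at this
    simp at this
    omega
  ext a
  rw [← huniv, mem_cDesL_cycInterval w hne, huniv]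
  simp only [descentsFrom, Finset.mem_univ, true_and, Finset.mem_filter, sub_zero]
  split_ifs with ha
  · rw [ha, neg_add_cancel]
  · rfl

theorem rotTo_inv_apply (w : Equiv.Perm (Fin n)) (r a : Fin n) :
    (rotTo w r)⁻¹ a = w⁻¹ a - (w⁻¹ r + 1) := by
  rw [Equiv.Perm.inv_eq_iff_eq]
  simp [rotTo, Equiv.Perm.inv_def, add_assoc]

theorem IrFinset_eq (hn : 2 ≤ n) (w : Equiv.Perm (Fin n)) (r : Fin n) :
    IrFinset w r = descentsFrom w (w⁻¹ r + 1) := by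
  ext a
  simp [IrFinset, cDesL_univ hn, descentsFrom, rotTo_inv_apply]

theorem ite_sub_add_one_lt_sub_add_one {P Q : Fin n} (hPQ : P ≠ Q) (s : Fin n) :
    (if Q - (s + 1) < P - (s + 1) then (1 : ℝ) else 0) =
      (if Q - s < P - s then 1 else 0) + ((if P = s then 1 else 0) - if Q = s then 1 else 0) := by
  have := P.isLt; have := Q.isLt; have := s.isLt
  have hPQ' : (P : ℕ) ≠ Q := fun h => hPQ (Fin.ext h)
  simp only [Fin.lt_def, Fin.ext_iff, val_sub_eq_ite, val_add_one_eq_ite]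
  split_ifs <;> first | omega | norm_num

theorem indic_descentsFrom_add_one (hn : 2 ≤ n) (w : Equiv.Perm (Fin n)) (s a : Fin n) :
    indic (descentsFrom w (s + 1)) a =
      indic (descentsFrom w s) a + (indic {w s} a - indic {w s} (a + 1)) := by
  have hne : w⁻¹ a ≠ w⁻¹ (a + 1) := fun h => add_one_ne_self hn a (w⁻¹.injective h).symm
  simp only [indic, descentsFrom, Finset.mem_filter, Finset.mem_univ, true_and,
    Finset.mem_singleton]
  simpa only [Equiv.Perm.inv_eq_iff_eq] using ite_sub_add_one_lt_sub_add_one hne s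

theorem cycSum_indic_descentsFrom_add_one (hn : 2 ≤ n) (w : Equiv.Perm (Fin n))
    (s i j : Fin n) :
    cycSum (indic (descentsFrom w (s + 1))) i j =
      cycSum (indic (descentsFrom w s)) i j + (indic {w s} i - indic {w s} j) := by
  rw [← cycSum_sub_comp_add_one]
  simp only [cycSum, ← Finset.sum_add_distrib, indic_descentsFrom_add_one hn]

theorem card_descentsFrom (hn : 2 ≤ n) (w : Equiv.Perm (Fin n)) (s : Fin n) :
    (descentsFrom w s).card = (descentsFrom w 0).card := by
  refine apply_eq_apply_of_forall_add_one (f := fun s => (descentsFrom w s).card) (fun s => ?_) s 0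
  have hshift : ∑ a, indic {w s} (a + 1) = ∑ a, indic {w s} a :=
    Equiv.sum_comp (Equiv.addRight 1) _
  have := Fintype.sum_congr _ _ (indic_descentsFrom_add_one hn w s)
  rw [Finset.sum_add_distrib, Finset.sum_sub_distrib, hshift, sub_self, add_zero,
    sum_indic, sum_indic] at this
  exact_mod_cast this

theorem cdesL_cycInterval (w : Equiv.Perm (Fin n)) {i j : Fin n} (hij : i ≠ j) :
    (cdesL w i (cycInterval i j) : ℝ) =
      cycSum (indic (descentsFrom w 0)) i j + if w⁻¹ i < w⁻¹ j then 1 else 0 := by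
  have key : ∀ a, indic (cDesL w i (cycInterval i j)) a =
      (if a - i < j - i then indic (descentsFrom w 0) a else 0) +
        if a = j then (if w⁻¹ i < w⁻¹ j then 1 else 0) else 0 := by
    intro a
    simp only [indic, mem_cDesL_cycInterval w hij, mem_cycInterval, descentsFrom,
      Finset.mem_filter, Finset.mem_univ, true_and, sub_zero]
    by_cases haj : a = j
    · simp [haj]
    · have hne : a - i ≠ j - i := fun h => haj (sub_left_inj.mp h)
      simp [haj, hne.le_iff_lt, ite_and]
  rw [cdesL, ← sum_indic, Finset.sum_congr rfl fun a _ => key a, Finset.sum_add_distrib,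
    Finset.sum_ite_eq']
  simp [cycSum, Finset.sum_filter]

end Descents

section Vertices

variable [NeZero n]

theorem sum_indic_IrFinset (hn : 2 ≤ n) (w : Equiv.Perm (Fin n)) (r : Fin n) :
    ∑ a, indic (IrFinset w r) a = cdesL w 0 Finset.univ := by
  rw [sum_indic, IrFinset_eq hn, card_descentsFrom hn, cdesL, cDesL_univ hn]

theorem cdesL_cycInterval_add_swap (hn : 2 ≤ n) (w : Equiv.Perm (Fin n)) {i j : Fin n}
    (hij : i ≠ j) :
    (cdesL w i (cycInterval i j) : ℝ) + cdesL w j (cycInterval j i) =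
      cdesL w 0 Finset.univ + 1 := by
  rw [cdesL_cycInterval w hij, cdesL_cycInterval w hij.symm, cdesL, cDesL_univ hn, ← sum_indic,
    ← cycSum_add_cycSum_swap _ hij]
  have hne : w⁻¹ i ≠ w⁻¹ j := fun h => hij (w⁻¹.injective h)
  rcases hne.lt_or_gt with h | h
  · simp only [h, h.not_gt, if_true, if_false]; ring
  · simp only [h, h.not_gt, if_true, if_false]; ring

theorem cycSum_indic_IrFinset (hn : 2 ≤ n) (w : Equiv.Perm (Fin n)) (p r : Fin n) :
    cycSum (indic (IrFinset w r)) (w p) (w (p + 1)) =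
      cdesL w (w p) (cycInterval (w p) (w (p + 1))) - 1 + if r = w p then 1 else 0 := by
  set F : Fin n → ℝ := fun s => cycSum (indic (descentsFrom w s)) (w p) (w (p + 1))
  have hstep : ∀ s, F (s + 1) - (if p + 1 = s + 1 then 1 else 0) =
      F s - if p + 1 = s then 1 else 0 := by
    intro s
    simp only [F, cycSum_indic_descentsFrom_add_one hn, indic, Finset.mem_singleton,
      w.injective.eq_iff, add_left_inj]
    ring
  have hF := apply_eq_apply_of_forall_add_one
    (f := fun s => F s - if p + 1 = s then 1 else 0) hstep (w⁻¹ r + 1) 0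
  have hne : w p ≠ w (p + 1) := fun h => add_one_ne_self hn p (w.injective h).symm
  have hcdes := cdesL_cycInterval w hne
  simp only [F, add_left_inj, eq_comm (a := p), Equiv.Perm.inv_eq_iff_eq] at hF
  simp only [Equiv.Perm.inv_def, Equiv.symm_apply_apply, lt_add_one_iff_add_one_ne_zero,
    ite_not] at hcdes
  rw [IrFinset_eq hn, hcdes]
  split_ifs at hF ⊢ <;> linarith

theorem edge_inequalities_iff (hn : 2 ≤ n) (w : Equiv.Perm (Fin n)) {i j : Fin n}
    (hij : i ≠ j) {x : Fin n → ℝ} (hx : ∑ a, x a = cdesL w 0 Finset.univ) :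
    ((i < j → (cdesL w i (cycInterval i j) : ℝ) - 1 ≤ cycSum x i j) ∧
      (j < i → cycSum x j i ≤ cdesL w j (cycInterval j i))) ↔
      (cdesL w i (cycInterval i j) : ℝ) - 1 ≤ cycSum x i j := by
  have hswap := cdesL_cycInterval_add_swap hn w hij
  have hsum := cycSum_add_cycSum_swap x hij
  rcases hij.lt_or_gt with h | h
  · simp [h, h.not_gt]
  · simp only [h, h.not_gt, false_imp_iff, true_imp_iff, true_and]
    constructor <;> intro <;> linarith

end Vertices

theorem w_simplex_facet_description_general
    (n : ℕ) [NeZero n] (hn : 2 ≤ n) (w : Equiv.Perm (Fin n)) :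
    simplexW w =
      {x : Fin n → ℝ | (∑ a, x a) = (cdesL w 0 Finset.univ : ℝ) ∧
        ∀ p : Fin n,
          (w p < w (p + 1) →
            (cdesL w (w p) (cycInterval (w p) (w (p + 1))) : ℝ) - 1 ≤
              cycSum x (w p) (w (p + 1))) ∧
          (w (p + 1) < w p →
            cycSum x (w (p + 1)) (w p) ≤
              (cdesL w (w (p + 1)) (cycInterval (w (p + 1)) (w p)) : ℝ))} := by
  have hedge : ∀ p, w p ≠ w (p + 1) := fun p h => add_one_ne_self hn p (w.injective h).symm
  have hvertex : vertexSet w = Set.range fun p => indic (IrFinset w (w p)) := by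
    rw [show (fun p => indic (IrFinset w (w p))) = (fun r => indic (IrFinset w r)) ∘ w from rfl,
      w.surjective.range_comp]
    ext; simp [vertexSet, eq_comm]
  have hH : Convex ℝ {x : Fin n → ℝ | ∑ a, x a = cdesL w 0 Finset.univ} :=
    convex_hyperplane
      ⟨fun _ _ => Finset.sum_add_distrib, fun _ _ => (Finset.mul_sum _ _ _).symm⟩ _
  rw [simplexW, hvertex, convexHull_range_eq_of_barycentric hH _
    (fun p => cycSumₗ (w p) (w (p + 1)))
    (fun p => cdesL w (w p) (cycInterval (w p) (w (p + 1))) - 1)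
    (fun p => sum_indic_IrFinset hn w (w p))]
  · ext x
    exact and_congr_right fun hx =>
      forall_congr' fun p => (edge_inequalities_iff hn w (hedge p) hx).symm
  · intro q p
    simp [cycSum_indic_IrFinset hn, eq_comm]
  · intro x hx y hy hxy
    refine sub_eq_zero.mp (eq_zero_of_cycSum_comp_add_one_eq_zero ?_ w.surjective fun p => ?_)
    · simp_all [Finset.sum_sub_distrib]
    · have := hxy p
      rwa [← sub_eq_zero, ← map_sub] at this
  · intro x hx y hy
    simp_all [sum_cycSum_comp_add_one]

theorem w_simplex_facet_description
    (n : ℕ) [NeZero n] (hn : 2 ≤ n) (w : Equiv.Perm (Fin n))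
    (hw : w (lastF n) = lastF n) :
    simplexW w =
      {x : Fin n → ℝ | (∑ a, x a) = (cdesL w 0 Finset.univ : ℝ) ∧
        ∀ p : Fin n,
          (w p < w (p + 1) →
            (cdesL w (w p) (cycInterval (w p) (w (p + 1))) : ℝ) - 1 ≤
              cycSum x (w p) (w (p + 1))) ∧
          (w (p + 1) < w p →
            cycSum x (w (p + 1)) (w p) ≤
              (cdesL w (w (p + 1)) (cycInterval (w (p + 1)) (w p)) : ℝ))} :=
  w_simplex_facet_description_general n hn w

end PositroidPaper
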